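/- arXiv:2111.15511 — 3 statements merged into one kernel-verified Lean document; each statement's English description precedes it below -/
import Mathlib

section
/- For smooth compactly supported scalar functions B_i on ℝ^3 and the projection P onto the divergence-free part, the j-th component of P(B_i ∇B_i) satisfies (P(B_i ∇B_i))_j = |∇|^{-2} ∂^k Q_{jk}(B_i, B_i), where Q_{jk}(u,v) = ∂_j u ∂_k v − ∂_k u ∂_j v and summation over i, k is understood; i.e., the Hodge projection of B_i ∇ B_i is expressed purely via the null forms Q_{jk}. -/
/-- Partial derivative ∂_j of a function on ℝ³. -/
noncomputable def pd {M : Type*} [NormedAddCommGroup M] [NormedSpace ℝ M]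
    (j : Fin 3) (f : (Fin 3 → ℝ) → M) (x : Fin 3 → ℝ) : M :=
  fderiv ℝ f x (Pi.single j 1)

section helpers
variable {M : Type*} [NormedRing M] [NormedAlgebra ℝ M]

lemma pd_mul {f g : (Fin 3 → ℝ) → M} {x : Fin 3 → ℝ}
    (hf : DifferentiableAt ℝ f x) (hg : DifferentiableAt ℝ g x) (j : Fin 3) :
    pd j (fun y => f y * g y) x = pd j f x * g x + f x * pd j g x := by
  have h : fderiv ℝ (fun y => f y * g y) x = _ := (hf.hasFDerivAt.mul' hg.hasFDerivAt).fderiv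
  simp only [pd, h, ContinuousLinearMap.add_apply, ContinuousLinearMap.smul_apply,
    ContinuousLinearMap.smulRight_apply, smul_eq_mul,
    MulOpposite.smul_eq_mul_unop, MulOpposite.unop_op]
  rw [add_comm]

lemma pd_symm {f : (Fin 3 → ℝ) → M} (hf : ContDiff ℝ (⊤ : ℕ∞) f) (j k : Fin 3) (x : Fin 3 → ℝ) :
    pd j (pd k f) x = pd k (pd j f) x := by
  have hsym : IsSymmSndFDerivAt ℝ f x := (hf.contDiffAt).isSymmSndFDerivAt (by rw [minSmoothness_of_isRCLikeNormedField]; exact WithTop.coe_le_coe.mpr le_top)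
  have hd : DifferentiableAt ℝ (fderiv ℝ f) x :=
    ((hf.fderiv_right (m := (⊤ : ℕ∞)) (by simp)).differentiable (by simp)).differentiableAt
  have key : ∀ (w u : Fin 3 → ℝ),
      fderiv ℝ (fun y => fderiv ℝ f y w) x u = fderiv ℝ (fderiv ℝ f) x u w := by
    intro w u
    rw [fderiv_clm_apply hd (differentiableAt_const w)]
    simp
  have e1 : pd k f = fun y => fderiv ℝ f y (Pi.single k 1) := rfl
  have e2 : pd j f = fun y => fderiv ℝ f y (Pi.single j 1) := rfl
  show fderiv ℝ (pd k f) x (Pi.single j 1) = fderiv ℝ (pd j f) x (Pi.single k 1)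
  rw [e1, e2, key, key, hsym]
end helpers

/-- The Hodge projection of B_i ∇B_i is expressed purely via null forms:
with v_k := B_i ∂_k B_i (sum over i) and (Pv)_j = |∇|^{-2} ∂^k (∂_j v_k − ∂_k v_j)
(the definition of P via Riesz transforms, `invLap` playing the role of |∇|^{-2}),
one has (P(B_i ∇B_i))_j = |∇|^{-2} ∂^k Q_{jk}(B_i, B_i), where
Q_{jk}(u,v) = ∂_j u ∂_k v − ∂_k u ∂_j v. -/
theorem stmt9 {M : Type*} [NormedRing M] [NormedAlgebra ℝ M]
    (invLap : ((Fin 3 → ℝ) → M) → ((Fin 3 → ℝ) → M))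
    (B : Fin 3 → (Fin 3 → ℝ) → M) (hB : ∀ i, ContDiff ℝ (⊤ : ℕ∞) (B i))
    (v : Fin 3 → (Fin 3 → ℝ) → M)
    (hv : ∀ k, v k = fun x => ∑ i, B i x * pd k (B i) x)
    (PBgrad : Fin 3 → (Fin 3 → ℝ) → M)
    (hP : ∀ j, PBgrad j =
      invLap (fun x => ∑ k, pd k (fun y => pd j (v k) y - pd k (v j) y) x)) :
    ∀ j, PBgrad j =
      invLap (fun x => ∑ k, pd k (fun y => ∑ i,
        (pd j (B i) y * pd k (B i) y - pd k (B i) y * pd j (B i) y)) x) := by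
  have hpdB : ∀ i k, ContDiff ℝ (⊤ : ℕ∞) (pd k (B i)) := by
    intro i k
    exact ((hB i).fderiv_right (by simp)).clm_apply contDiff_const
  have key : ∀ j k, (fun y => pd j (v k) y - pd k (v j) y) =
      (fun y => ∑ i, (pd j (B i) y * pd k (B i) y - pd k (B i) y * pd j (B i) y)) := by
    intro j k
    funext y
    have hpdv : ∀ a b (y : Fin 3 → ℝ), pd a (v b) y =
        ∑ i, (pd a (B i) y * pd b (B i) y + B i y * pd a (pd b (B i)) y) := by
      intro a b y
      rw [hv b]
      have hdiff : ∀ i : Fin 3, DifferentiableAt ℝ (fun x => B i x * pd b (B i) x) y :=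
        fun i => (((hB i).differentiable (by simp)) y).mul (((hpdB i b).differentiable (by simp)) y)
      have hs : HasFDerivAt (fun x => ∑ i, B i x * pd b (B i) x)
          (∑ i : Fin 3, fderiv ℝ (fun x => B i x * pd b (B i) x) y) y :=
        HasFDerivAt.fun_sum fun i _ => (hdiff i).hasFDerivAt
      have : pd a (fun x => ∑ i, B i x * pd b (B i) x) y
          = ∑ i, pd a (fun x => B i x * pd b (B i) x) y := by
        show (fderiv ℝ (fun x => ∑ i, B i x * pd b (B i) x) y) (Pi.single a 1) = _
        rw [hs.fderiv, ContinuousLinearMap.sum_apply]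
        rfl
      rw [this]
      exact Finset.sum_congr rfl fun i _ =>
        pd_mul (((hB i).differentiable (by simp)) y) (((hpdB i b).differentiable (by simp)) y) a
    rw [hpdv j k y, hpdv k j y, ← Finset.sum_sub_distrib]
    refine Finset.sum_congr rfl fun i _ => ?_
    rw [pd_symm (hB i) j k y]
    abel
  intro j
  have harg : (fun x => ∑ k, pd k (fun y => pd j (v k) y - pd k (v j) y) x)
      = (fun x => ∑ k, pd k (fun y => ∑ i,
        (pd j (B i) y * pd k (B i) y - pd k (B i) y * pd j (B i) y)) x) := by
    funext x
    exact Finset.sum_congr rfl fun k _ => by rw [key j k]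
  rw [hP j, harg]
end

section
/- Let τ_1 + τ_2 + τ_3 = 0 be real numbers and ξ_3 ∈ ℝ^3 with ⟨τ_3⟩ ∼ ⟨ξ_3⟩ (i.e., c⟨ξ_3⟩ ≤ ⟨τ_3⟩ ≤ C⟨ξ_3⟩). Then for any 0 < ε < 1/2: |τ_2| + |τ_3| ≲ ⟨τ_1⟩^{1/2−ε}⟨τ_2⟩^{1/2+ε} + ⟨τ_1⟩^{1/2−ε}⟨ξ_3⟩^{1/2+ε} + ⟨τ_2⟩^{1/2+ε}⟨ξ_3⟩^{1/2−ε}, with implicit constant depending only on ε, c, C. -/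
/-- The Japanese bracket ⟨x⟩ = (1 + |x|²)^{1/2} of a real number. -/
noncomputable def jap (x : ℝ) : ℝ := Real.sqrt (1 + x ^ 2)

lemma jap_one_le (x : ℝ) : 1 ≤ jap x := by
  have h : Real.sqrt 1 ≤ Real.sqrt (1 + x ^ 2) :=
    Real.sqrt_le_sqrt (by nlinarith [sq_nonneg x])
  simpa [jap] using h

lemma jap_pos (x : ℝ) : 0 < jap x := lt_of_lt_of_le one_pos (jap_one_le x)

lemma abs_le_jap (x : ℝ) : |x| ≤ jap x := by
  have h : Real.sqrt (x ^ 2) ≤ Real.sqrt (1 + x ^ 2) :=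
    Real.sqrt_le_sqrt (by linarith)
  simpa [jap, Real.sqrt_sq_eq_abs] using h

lemma jap_neg (x : ℝ) : jap (-x) = jap x := by simp [jap]

lemma jap_add_le (x y : ℝ) : jap (x + y) ≤ jap x + jap y := by
  have hx0 : (0:ℝ) ≤ 1 + x ^ 2 := by positivity
  have hy0 : (0:ℝ) ≤ 1 + y ^ 2 := by positivity
  have hax : |x| ≤ jap x := abs_le_jap x
  have hay : |y| ≤ jap y := abs_le_jap y
  have hsx : jap x ^ 2 = 1 + x ^ 2 := Real.sq_sqrt hx0
  have hsy : jap y ^ 2 = 1 + y ^ 2 := Real.sq_sqrt hy0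
  have hmul : |x| * |y| ≤ jap x * jap y :=
    mul_le_mul hax hay (abs_nonneg y) ((jap_pos x).le)
  have hxy : x * y ≤ jap x * jap y := by
    calc x * y ≤ |x * y| := le_abs_self _
    _ = |x| * |y| := abs_mul x y
    _ ≤ _ := hmul
  have key : 1 + (x + y) ^ 2 ≤ (jap x + jap y) ^ 2 := by nlinarith
  calc jap (x + y) = Real.sqrt (1 + (x + y) ^ 2) := rfl
    _ ≤ Real.sqrt ((jap x + jap y) ^ 2) := Real.sqrt_le_sqrt key
    _ = jap x + jap y := Real.sqrt_sq (by linarith [jap_pos x, jap_pos y])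

set_option maxHeartbeats 1000000 in
/-- If τ₁ + τ₂ + τ₃ = 0 and ⟨τ₃⟩ ∼ ⟨ξ₃⟩ (i.e. c⟨ξ₃⟩ ≤ ⟨τ₃⟩ ≤ C⟨ξ₃⟩), then for
0 < ε < 1/2:
|τ₂| + |τ₃| ≲ ⟨τ₁⟩^{1/2−ε}⟨τ₂⟩^{1/2+ε} + ⟨τ₁⟩^{1/2−ε}⟨ξ₃⟩^{1/2+ε}
             + ⟨τ₂⟩^{1/2+ε}⟨ξ₃⟩^{1/2−ε},
with implicit constant depending only on ε, c, C. -/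
theorem stmt13 (ε c C : ℝ) (hε0 : 0 < ε) (hε : ε < 1/2) (hc : 0 < c) (hC : 0 < C) :
    ∃ K > 0, ∀ (τ1 τ2 τ3 : ℝ) (ξ3 : EuclideanSpace ℝ (Fin 3)),
      τ1 + τ2 + τ3 = 0 →
      c * jap ‖ξ3‖ ≤ jap τ3 →
      jap τ3 ≤ C * jap ‖ξ3‖ →
      |τ2| + |τ3| ≤ K *
        (jap τ1 ^ (1/2 - ε) * jap τ2 ^ (1/2 + ε) +
         jap τ1 ^ (1/2 - ε) * jap ‖ξ3‖ ^ (1/2 + ε) +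
         jap τ2 ^ (1/2 + ε) * jap ‖ξ3‖ ^ (1/2 - ε)) := by
  set M := max 1 C with hM
  have hM1 : (1:ℝ) ≤ M := le_max_left 1 C
  refine ⟨6 * M, by positivity, ?_⟩
  intro τ1 τ2 τ3 ξ3 hsum hlow hupp
  set p := 1/2 - ε with hpdef
  set q := 1/2 + ε with hqdef
  have hp0 : 0 ≤ p := by rw [hpdef]; linarith
  have hp1 : p ≤ 1 := by rw [hpdef]; linarith
  have hq0 : 0 ≤ q := by rw [hqdef]; linarith
  have hq1 : q ≤ 1 := by rw [hqdef]; linarith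
  set a := jap τ1 with ha
  set b := jap τ2 with hb
  set d := jap τ3 with hd
  set e := jap ‖ξ3‖ with he
  have ha1 : 1 ≤ a := jap_one_le _
  have hb1 : 1 ≤ b := jap_one_le _
  have hd1 : 1 ≤ d := jap_one_le _
  have he1 : 1 ≤ e := jap_one_le _
  have ha0 : (0:ℝ) ≤ a := by linarith
  have hb0 : (0:ℝ) ≤ b := by linarith
  have hd0 : (0:ℝ) ≤ d := by linarith
  have he0 : (0:ℝ) ≤ e := by linarith
  have hb_le : b ≤ a + d := by
    have h2 : τ2 = -τ1 + -τ3 := by linarith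
    calc b = jap (-τ1 + -τ3) := by rw [hb, h2]
      _ ≤ jap (-τ1) + jap (-τ3) := jap_add_le _ _
      _ = a + d := by rw [jap_neg, jap_neg]
  have hd_le : d ≤ a + b := by
    have h2 : τ3 = -τ1 + -τ2 := by linarith
    calc d = jap (-τ1 + -τ2) := by rw [hd, h2]
      _ ≤ jap (-τ1) + jap (-τ2) := jap_add_le _ _
      _ = a + b := by rw [jap_neg, jap_neg]
  have hdCe : d ≤ M * e := le_trans hupp
    (mul_le_mul_of_nonneg_right (le_max_right 1 C) he0)
  -- splitting x = x^p * x^q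
  have hbsplit : b = b ^ p * b ^ q := by
    rw [← Real.rpow_add (by linarith : (0:ℝ) < b)]
    rw [hpdef, hqdef]; norm_num
  have hdsplit : d = d ^ p * d ^ q := by
    rw [← Real.rpow_add (by linarith : (0:ℝ) < d)]
    rw [hpdef, hqdef]; norm_num
  -- nonnegativity of powers
  have hap0 : 0 ≤ a ^ p := Real.rpow_nonneg ha0 p
  have hbq0 : 0 ≤ b ^ q := Real.rpow_nonneg hb0 q
  have hep0 : 0 ≤ e ^ p := Real.rpow_nonneg he0 p
  have heq0 : 0 ≤ e ^ q := Real.rpow_nonneg he0 q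
  -- bound b^p ≤ 2M(a^p + e^p)
  have hbe : b ≤ 2 * M * max a e := by
    have h1 : a ≤ M * max a e := by
      calc a ≤ max a e := le_max_left a e
        _ = 1 * max a e := (one_mul _).symm
        _ ≤ M * max a e := by
            apply mul_le_mul_of_nonneg_right hM1 (le_trans ha0 (le_max_left a e))
    have h2 : d ≤ M * max a e := le_trans hdCe
      (mul_le_mul_of_nonneg_left (le_max_right a e) (by linarith))
    linarith
  have hmaxpe : (max a e) ^ p ≤ a ^ p + e ^ p := by
    rcases le_total a e with h | h
    · rw [max_eq_right h]; linarith
    · rw [max_eq_left h]; linarith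
  have h2Mp : (2 * M) ^ p ≤ 2 * M := by
    calc (2 * M) ^ p ≤ (2 * M) ^ (1:ℝ) :=
          Real.rpow_le_rpow_of_exponent_le (by linarith) hp1
      _ = 2 * M := Real.rpow_one _
  have hbp : b ^ p ≤ 2 * M * (a ^ p + e ^ p) := by
    calc b ^ p ≤ (2 * M * max a e) ^ p :=
          Real.rpow_le_rpow hb0 hbe hp0
      _ = (2 * M) ^ p * (max a e) ^ p := by
          rw [Real.mul_rpow (by linarith) (le_trans ha0 (le_max_left a e))]
      _ ≤ (2 * M) * (a ^ p + e ^ p) := by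
          apply mul_le_mul h2Mp hmaxpe
            (Real.rpow_nonneg (le_trans ha0 (le_max_left a e)) p)
            (by linarith)
  have hbbound : b ≤ 2 * M * (a ^ p * b ^ q + b ^ q * e ^ p) := by
    calc b = b ^ p * b ^ q := hbsplit
      _ ≤ (2 * M * (a ^ p + e ^ p)) * b ^ q := by
          apply mul_le_mul_of_nonneg_right hbp hbq0
      _ = 2 * M * (a ^ p * b ^ q + b ^ q * e ^ p) := by ring
  -- bound d
  have hT1 : 0 ≤ a ^ p * b ^ q := mul_nonneg hap0 hbq0
  have hT2 : 0 ≤ a ^ p * e ^ q := mul_nonneg hap0 heq0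
  have hT3 : 0 ≤ b ^ q * e ^ p := mul_nonneg hbq0 hep0
  have habs : |τ2| + |τ3| ≤ b + d := add_le_add (abs_le_jap τ2) (abs_le_jap τ3)
  have hM0 : (0:ℝ) ≤ M := by linarith
  have hMT1 : 0 ≤ M * (a ^ p * b ^ q) := mul_nonneg hM0 hT1
  have hMT2 : 0 ≤ M * (a ^ p * e ^ q) := mul_nonneg hM0 hT2
  have hMT3 : 0 ≤ M * (b ^ q * e ^ p) := mul_nonneg hM0 hT3
  rcases le_total a b with hab | hab
  · -- d ≤ 2b, use bound on b
    have hd2b : d ≤ 2 * b := by linarith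
    calc |τ2| + |τ3| ≤ b + d := habs
      _ ≤ 6 * M * (a ^ p * b ^ q + a ^ p * e ^ q + b ^ q * e ^ p) := by
          linarith [hbbound, hd2b, hMT1, hMT2, hMT3]
  · -- b ≤ a: d = d^p d^q ≤ (2a)^p (Me)^q ≤ 2M a^p e^q
    have hd2a : d ≤ 2 * a := by linarith
    have hdp : d ^ p ≤ 2 * a ^ p := by
      calc d ^ p ≤ (2 * a) ^ p := Real.rpow_le_rpow hd0 hd2a hp0
        _ = 2 ^ p * a ^ p := by rw [Real.mul_rpow (by norm_num) ha0]
        _ ≤ 2 * a ^ p := by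
            apply mul_le_mul_of_nonneg_right _ hap0
            calc (2:ℝ) ^ p ≤ (2:ℝ) ^ (1:ℝ) :=
                  Real.rpow_le_rpow_of_exponent_le (by norm_num) hp1
              _ = 2 := Real.rpow_one _
    have hdq : d ^ q ≤ M * e ^ q := by
      calc d ^ q ≤ (M * e) ^ q := Real.rpow_le_rpow hd0 hdCe hq0
        _ = M ^ q * e ^ q := by rw [Real.mul_rpow (by linarith) he0]
        _ ≤ M * e ^ q := by
            apply mul_le_mul_of_nonneg_right _ heq0
            calc M ^ q ≤ M ^ (1:ℝ) :=
                  Real.rpow_le_rpow_of_exponent_le hM1 hq1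
              _ = M := Real.rpow_one _
    have hdbound : d ≤ 2 * M * (a ^ p * e ^ q) := by
      calc d = d ^ p * d ^ q := hdsplit
        _ ≤ (2 * a ^ p) * (M * e ^ q) := by
            apply mul_le_mul hdp hdq (Real.rpow_nonneg hd0 q) (by linarith)
        _ = 2 * M * (a ^ p * e ^ q) := by ring
    calc |τ2| + |τ3| ≤ b + d := habs
      _ ≤ 6 * M * (a ^ p * b ^ q + a ^ p * e ^ q + b ^ q * e ^ p) := by
          linarith [hbbound, hdbound, hMT1, hMT2, hMT3]
end

section
/- For real numbers s with s > 3/4 and the annulus indicator χ_{|ξ|=T+O(1)} (characteristic function of {ξ ∈ ℝ^3 : | |ξ| − T | ≤ C}), the convolution bound sup_{T ∈ ℕ} ‖ χ_{|ξ|=T+O(1)} ∗ ⟨·⟩^{−2(s+1/4)} ‖_{L^∞(ℝ^3)} < ∞ holds; i.e., the convolution of the annulus indicator with ⟨ξ⟩^{−2s−1/2} is bounded uniformly in T. -/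
/-!
The shell `A_T = {y : |‖y‖ - T| ≤ C}` meets every ball of radius `r ≥ 1` in volume `O(r²)`,
uniformly in `T`. If `T ≲ r` this is the volume `O(T² C)` of the whole shell. Otherwise, after a
rotation taking the centre of the ball to the first axis, the intersection lies in a cylinder of
radius `r` around that axis, and each line parallel to the axis meets the shell, at distance
`≳ T` from the origin, in length `O(C)`.
Since `⟨x - y⟩^{-2q} ≤ ∑ⱼ 4^{-jq} 1_{B(x, 2^{j+1})}(y)`, the convolution is then at most
`∑ⱼ 4^{-jq} κ 4^{j+1}`, a convergent geometric series for `q = s + 1/4 > 1`.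
-/

open MeasureTheory Metric ENNReal Real

theorem Real.volume_setOf_sq_mem_Icc_le (a b : ℝ) :
    volume {t : ℝ | t ^ 2 ∈ Set.Icc a b} ≤ ENNReal.ofReal (2 * (√b - √a)) := by
  have hsub : {t : ℝ | t ^ 2 ∈ Set.Icc a b} ⊆ Set.Icc (-√b) (-√a) ∪ Set.Icc √a √b := by
    rintro t ⟨hat, htb⟩
    have hlow : √a ≤ |t| := by simpa [Real.sqrt_sq_eq_abs] using Real.sqrt_le_sqrt hat
    have hup : |t| ≤ √b := Real.abs_le_sqrt htb
    rcases le_total 0 t with ht | ht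
    · rw [abs_of_nonneg ht] at hlow hup
      exact Or.inr ⟨hlow, hup⟩
    · rw [abs_of_nonpos ht] at hlow hup
      exact Or.inl ⟨by linarith, by linarith⟩
  calc volume {t : ℝ | t ^ 2 ∈ Set.Icc a b}
      ≤ volume (Set.Icc (-√b) (-√a)) + volume (Set.Icc √a √b) :=
        (measure_mono hsub).trans (measure_union_le _ _)
    _ = ENNReal.ofReal (2 * (√b - √a)) := by
        rw [Real.volume_Icc, Real.volume_Icc, neg_sub_neg, ← two_mul,
          ENNReal.ofReal_mul zero_le_two, ENNReal.ofReal_ofNat]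

theorem Real.sqrt_sub_sqrt_le {a b m : ℝ} (hm : 0 < m) (hma : m ^ 2 ≤ a) (hab : a ≤ b) :
    √b - √a ≤ (b - a) / (2 * m) := by
  have ha : m ≤ √a := Real.le_sqrt_of_sq_le hma
  have hba : √a ≤ √b := Real.sqrt_le_sqrt hab
  have hdiff : (√b - √a) * (√b + √a) = b - a := by
    rw [mul_comm, ← sq_sub_sq, Real.sq_sqrt (by nlinarith), Real.sq_sqrt (by nlinarith)]
  rw [le_div_iff₀ (by positivity), ← hdiff]
  exact mul_le_mul_of_nonneg_left (by linarith) (by linarith)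

theorem MeasureTheory.Measure.prod_le_mul_of_slice_le {α β : Type*} [MeasurableSpace α]
    [MeasurableSpace β] {μ : Measure α} {ν : Measure β} [SFinite μ] [SFinite ν]
    {s : Set (α × β)} (hs : MeasurableSet s) {D : Set β} {L : ℝ≥0∞}
    (hsD : ∀ p ∈ s, p.2 ∈ D) (hL : ∀ b ∈ D, μ ((·, b) ⁻¹' s) ≤ L) :
    μ.prod ν s ≤ L * ν D := by
  rw [Measure.prod_apply_symm hs]
  refine (lintegral_mono fun b => ?_).trans (lintegral_indicator_const_le D L)
  by_cases hb : b ∈ D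
  · simpa [hb] using hL b hb
  · have : (·, b) ⁻¹' s = ∅ := Set.eq_empty_of_forall_notMem fun a ha => hb (hsD _ ha)
    simp [this]

theorem exists_le_two_pow_succ_and_rpow_neg_le {q : ℝ} (hq : 0 ≤ q) (d : ℝ) :
    ∃ j : ℕ, d ≤ 2 ^ (j + 1) ∧ (1 + d ^ 2) ^ (-q) ≤ ((2 : ℝ) ^ (-2 * q)) ^ j := by
  obtain ⟨j, hj, hj'⟩ := exists_nat_pow_near (le_max_left 1 d) one_lt_two
  refine ⟨j, (le_max_right 1 d).trans hj'.le, ?_⟩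
  have hsq : ((2 : ℝ) ^ j) ^ 2 ≤ 1 + d ^ 2 := by
    calc ((2 : ℝ) ^ j) ^ 2 ≤ max 1 d ^ 2 := pow_le_pow_left₀ (by positivity) hj 2
      _ ≤ 1 + d ^ 2 := by
        rcases max_cases 1 d with ⟨h, -⟩ | ⟨h, -⟩ <;> rw [h] <;> nlinarith
  calc (1 + d ^ 2) ^ (-q) ≤ (((2 : ℝ) ^ j) ^ 2) ^ (-q) :=
        Real.rpow_le_rpow_of_nonpos (by positivity) hsq (by linarith)
    _ = ((2 : ℝ) ^ (-2 * q)) ^ j := by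
        rw [← Real.rpow_mul_natCast zero_le_two, ← pow_mul, ← Real.rpow_natCast,
          ← Real.rpow_mul zero_le_two]
        push_cast
        ring_nf

theorem lintegral_one_add_dist_sq_rpow_neg_le {X : Type*} [PseudoMetricSpace X]
    [MeasurableSpace X] [OpensMeasurableSpace X] (μ : Measure X) (x : X) {κ a q : ℝ}
    (hq : 0 ≤ q) (haq : a < 2 * q)
    (hμ : ∀ r, 1 ≤ r → μ (closedBall x r) ≤ ENNReal.ofReal (κ * r ^ a)) :
    ∫⁻ y, ENNReal.ofReal ((1 + dist x y ^ 2) ^ (-q)) ∂μ ≤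
      ENNReal.ofReal (κ * 2 ^ a / (1 - 2 ^ (a - 2 * q))) := by
  set ρ : ℝ := 2 ^ (a - 2 * q)
  have hρ0 : 0 ≤ ρ := by positivity
  have hρ1 : ρ < 1 := Real.rpow_lt_one_of_one_lt_of_neg one_lt_two (by linarith)
  have hpoint : ∀ y, ENNReal.ofReal ((1 + dist x y ^ 2) ^ (-q)) ≤
      ∑' j : ℕ, (closedBall x (2 ^ (j + 1))).indicator
        (fun _ => ENNReal.ofReal (((2 : ℝ) ^ (-2 * q)) ^ j)) y := by
    intro y
    obtain ⟨j, hdj, hwj⟩ := exists_le_two_pow_succ_and_rpow_neg_le hq (dist x y)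
    have hy : y ∈ closedBall x (2 ^ (j + 1)) := by rwa [mem_closedBall, dist_comm]
    calc ENNReal.ofReal ((1 + dist x y ^ 2) ^ (-q)) ≤ ENNReal.ofReal (((2 : ℝ) ^ (-2 * q)) ^ j) :=
          ENNReal.ofReal_le_ofReal hwj
      _ = (closedBall x (2 ^ (j + 1))).indicator
            (fun _ => ENNReal.ofReal (((2 : ℝ) ^ (-2 * q)) ^ j)) y := by
          rw [Set.indicator_of_mem hy]
      _ ≤ _ := ENNReal.le_tsum j
  have hterm : ∀ j : ℕ, ((2 : ℝ) ^ (-2 * q)) ^ j * (κ * ((2 : ℝ) ^ (j + 1)) ^ a) =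
      κ * 2 ^ a * ρ ^ j := by
    intro j
    rw [← Real.rpow_mul_natCast zero_le_two, ← Real.rpow_natCast_mul zero_le_two,
      ← Real.rpow_mul_natCast zero_le_two, mul_left_comm, ← Real.rpow_add two_pos,
      mul_assoc κ, ← Real.rpow_add two_pos]
    congr 2
    push_cast
    ring
  calc ∫⁻ y, ENNReal.ofReal ((1 + dist x y ^ 2) ^ (-q)) ∂μ
      ≤ ∫⁻ y, ∑' j : ℕ, (closedBall x (2 ^ (j + 1))).indicator
          (fun _ => ENNReal.ofReal (((2 : ℝ) ^ (-2 * q)) ^ j)) y ∂μ := lintegral_mono hpoint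
    _ = ∑' j : ℕ, ENNReal.ofReal (((2 : ℝ) ^ (-2 * q)) ^ j) * μ (closedBall x (2 ^ (j + 1))) := by
        rw [lintegral_tsum fun j =>
          (measurable_const.indicator measurableSet_closedBall).aemeasurable]
        simp_rw [lintegral_indicator_const measurableSet_closedBall]
    _ ≤ ∑' j : ℕ, ENNReal.ofReal (κ * 2 ^ a) * ENNReal.ofReal ρ ^ j := by
        refine ENNReal.tsum_le_tsum fun j => ?_
        calc ENNReal.ofReal (((2 : ℝ) ^ (-2 * q)) ^ j) * μ (closedBall x (2 ^ (j + 1)))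
            ≤ ENNReal.ofReal (((2 : ℝ) ^ (-2 * q)) ^ j) *
                ENNReal.ofReal (κ * ((2 : ℝ) ^ (j + 1)) ^ a) :=
              mul_le_mul_right (hμ _ (one_le_pow₀ one_le_two)) _
          _ = ENNReal.ofReal (κ * 2 ^ a) * ENNReal.ofReal ρ ^ j := by
              rw [← ENNReal.ofReal_mul (by positivity), hterm, ← ENNReal.ofReal_pow hρ0,
                ENNReal.ofReal_mul' (by positivity)]
    _ = ENNReal.ofReal (κ * 2 ^ a / (1 - ρ)) := by
        rw [ENNReal.tsum_mul_left, ENNReal.tsum_geometric, ENNReal.ofReal_div_of_pos (by linarith),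
          ENNReal.ofReal_sub _ hρ0, ENNReal.ofReal_one, div_eq_mul_inv]

def sphericalShell {E : Type*} [SeminormedAddCommGroup E] (T C : ℝ) : Set E :=
  {y | |‖y‖ - T| ≤ C}

section sphericalShell

variable {E : Type*} [NormedAddCommGroup E] {T C : ℝ}

@[simp]
theorem mem_sphericalShell {y : E} : y ∈ sphericalShell T C ↔ |‖y‖ - T| ≤ C := Iff.rfl

theorem measurableSet_sphericalShell [MeasurableSpace E] [OpensMeasurableSpace E] :
    MeasurableSet (sphericalShell T C : Set E) :=
  measurableSet_le (by fun_prop) measurable_const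

theorem preimage_sphericalShell [NormedSpace ℝ E] (R : E ≃ₗᵢ[ℝ] E) :
    R ⁻¹' sphericalShell T C = sphericalShell T C := by
  ext y
  simp

theorem sphericalShell_subset_closedBall_diff_ball :
    (sphericalShell T C : Set E) ⊆ closedBall 0 (T + C) \ ball 0 (max (T - C) 0) := by
  intro y hy
  obtain ⟨hlow, hup⟩ := abs_le.mp (mem_sphericalShell.mp hy)
  simp only [Set.mem_sdiff, mem_closedBall, mem_ball, dist_zero_right, not_lt, max_le_iff]
  exact ⟨by linarith, by linarith, norm_nonneg y⟩

theorem exists_linearIsometryEquiv_apply_eq [InnerProductSpace ℝ E] {u v : E} (h : ‖u‖ = ‖v‖) :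
    ∃ R : E ≃ₗᵢ[ℝ] E, R u = v :=
  ⟨_, Submodule.reflection_sub h⟩

theorem volume_closedBall_inter_sphericalShell_map [InnerProductSpace ℝ E] [FiniteDimensional ℝ E]
    [MeasurableSpace E] [BorelSpace E] (R : E ≃ₗᵢ[ℝ] E) (x : E) (r : ℝ) :
    volume (closedBall (R x) r ∩ sphericalShell T C) =
      volume (closedBall x r ∩ sphericalShell T C) := by
  rw [← R.measurePreserving.measure_preimage
    (measurableSet_closedBall.inter measurableSet_sphericalShell).nullMeasurableSet,
    Set.preimage_inter, R.preimage_closedBall, R.symm_apply_apply, preimage_sphericalShell]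

end sphericalShell

theorem volume_cylinder_inter_shell_le {T C r : ℝ} (hC : 0 ≤ C) (hr : 0 ≤ r)
    (hT : 2 * C + 2 * r < T) :
    volume {p : ℝ × (Fin 2 → ℝ) | p.2 0 ^ 2 + p.2 1 ^ 2 ≤ r ^ 2 ∧
      p.1 ^ 2 ∈ Set.Icc ((T - C) ^ 2 - (p.2 0 ^ 2 + p.2 1 ^ 2))
        ((T + C) ^ 2 - (p.2 0 ^ 2 + p.2 1 ^ 2))}
      ≤ ENNReal.ofReal (32 * C * r ^ 2) := by
  have hmeas : MeasurableSet {p : ℝ × (Fin 2 → ℝ) | p.2 0 ^ 2 + p.2 1 ^ 2 ≤ r ^ 2 ∧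
      p.1 ^ 2 ∈ Set.Icc ((T - C) ^ 2 - (p.2 0 ^ 2 + p.2 1 ^ 2))
        ((T + C) ^ 2 - (p.2 0 ^ 2 + p.2 1 ^ 2))} := by
    simp only [Set.mem_Icc, Set.ofPred_and]
    refine (measurableSet_le ?_ ?_).inter
      ((measurableSet_le ?_ ?_).inter (measurableSet_le ?_ ?_)) <;> fun_prop
  have hslice : ∀ ρ, 0 ≤ ρ → ρ ≤ r ^ 2 →
      volume {t : ℝ | t ^ 2 ∈ Set.Icc ((T - C) ^ 2 - ρ) ((T + C) ^ 2 - ρ)} ≤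
        ENNReal.ofReal (8 * C) := by
    intro ρ hρ0 hρr
    refine (Real.volume_setOf_sq_mem_Icc_le _ _).trans (ENNReal.ofReal_le_ofReal ?_)
    have hsqrt := Real.sqrt_sub_sqrt_le (a := (T - C) ^ 2 - ρ) (b := (T + C) ^ 2 - ρ)
      (m := T / 2) (by linarith) (by nlinarith) (by nlinarith)
    have hT0 : T ≠ 0 := by linarith
    have hquot : ((T + C) ^ 2 - ρ - ((T - C) ^ 2 - ρ)) / (2 * (T / 2)) = 4 * C := by
      field_simp
      ring
    linarith
  have hdisk : {w : Fin 2 → ℝ | w 0 ^ 2 + w 1 ^ 2 ≤ r ^ 2} ⊆ closedBall 0 r := by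
    intro w (hw : w 0 ^ 2 + w 1 ^ 2 ≤ r ^ 2)
    rw [mem_closedBall, dist_zero_right, pi_norm_le_iff_of_nonneg hr, Fin.forall_fin_two,
      Real.norm_eq_abs, Real.norm_eq_abs]
    exact ⟨abs_le_of_sq_le_sq (by nlinarith [sq_nonneg (w 1)]) hr,
      abs_le_of_sq_le_sq (by nlinarith [sq_nonneg (w 0)]) hr⟩
  rw [Measure.volume_eq_prod]
  calc _ ≤ ENNReal.ofReal (8 * C) * volume {w : Fin 2 → ℝ | w 0 ^ 2 + w 1 ^ 2 ≤ r ^ 2} :=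
        Measure.prod_le_mul_of_slice_le hmeas (fun p hp => Set.mem_ofPred.mpr hp.1) fun w hw =>
          (measure_mono fun t ht => ht.2).trans
            (hslice (w 0 ^ 2 + w 1 ^ 2) (by positivity) (Set.mem_ofPred.mp hw))
    _ ≤ ENNReal.ofReal (8 * C) * volume (closedBall (0 : Fin 2 → ℝ) r) := by gcongr
    _ = ENNReal.ofReal (32 * C * r ^ 2) := by
        rw [Real.volume_pi_closedBall _ hr, ← ENNReal.ofReal_mul (by positivity), Fintype.card_fin]
        ring_nf

local notation "E3" => EuclideanSpace ℝ (Fin 3)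

theorem volume_sphericalShell_le {T C : ℝ} (hT : 0 ≤ T) (hC : 0 ≤ C) :
    volume (sphericalShell T C : Set E3) ≤
      ENNReal.ofReal (π * 4 / 3 * ((T + C) ^ 3 - (T - C) ^ 3)) := by
  have hρ : max (T - C) 0 ≤ T + C := max_le (by linarith) (by linarith)
  calc volume (sphericalShell T C : Set E3)
      ≤ volume (closedBall (0 : E3) (T + C)) - volume (ball (0 : E3) (max (T - C) 0)) := by
        rw [← measure_sdiff (ball_subset_closedBall.trans (closedBall_subset_closedBall hρ))
          measurableSet_ball.nullMeasurableSet measure_ball_lt_top.ne]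
        exact measure_mono sphericalShell_subset_closedBall_diff_ball
    _ = ENNReal.ofReal (π * 4 / 3 * ((T + C) ^ 3 - max (T - C) 0 ^ 3)) := by
        rw [EuclideanSpace.volume_closedBall_fin_three, EuclideanSpace.volume_ball_fin_three,
          ← ENNReal.ofReal_pow (by positivity), ← ENNReal.ofReal_pow (le_max_right _ _),
          ← ENNReal.ofReal_mul (by positivity), ← ENNReal.ofReal_mul (by positivity),
          ← ENNReal.ofReal_sub _ (by positivity)]
        ring_nf
    _ ≤ ENNReal.ofReal (π * 4 / 3 * ((T + C) ^ 3 - (T - C) ^ 3)) := by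
        refine ENNReal.ofReal_le_ofReal
          (mul_le_mul_of_nonneg_left (sub_le_sub_left ?_ _) (by positivity))
        exact (Odd.pow_le_pow ⟨1, rfl⟩).mpr (le_max_left _ _)

theorem volume_closedBall_inter_sphericalShell_le_of_lt {T C r : ℝ} (hC : 0 ≤ C) (hr : 0 ≤ r)
    (hT : 2 * C + 2 * r < T) (x : E3) :
    volume (closedBall x r ∩ sphericalShell T C) ≤ ENNReal.ofReal (32 * C * r ^ 2) := by
  obtain ⟨R, hR⟩ := exists_linearIsometryEquiv_apply_eq
    (u := EuclideanSpace.single 0 ‖x‖) (v := x) (by simp)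
  rw [← hR, volume_closedBall_inter_sphericalShell_map]
  let e : E3 ≃ᵐ ℝ × (Fin 2 → ℝ) :=
    (MeasurableEquiv.toLp 2 (Fin 3 → ℝ)).symm.trans (MeasurableEquiv.piFinSuccAbove (fun _ => ℝ) 0)
  have he : MeasurePreserving e :=
    (EuclideanSpace.volume_preserving_symm_measurableEquiv_toLp (Fin 3)).trans
      (volume_preserving_piFinSuccAbove (fun _ => ℝ) 0)
  refine (measure_mono ?_).trans
    ((he.measure_preimage_equiv _).trans_le (volume_cylinder_inter_shell_le hC hr hT))
  rintro y ⟨hyx, hyT⟩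
  have hnorm : ‖y‖ ^ 2 = y 0 ^ 2 + (y 1 ^ 2 + y 2 ^ 2) := by
    simp only [EuclideanSpace.norm_sq_eq, Real.norm_eq_abs, sq_abs, Fin.sum_univ_three]
    ring
  have hdist : ‖y - EuclideanSpace.single 0 ‖x‖‖ ^ 2 = (y 0 - ‖x‖) ^ 2 + (y 1 ^ 2 + y 2 ^ 2) := by
    simp only [EuclideanSpace.norm_sq_eq, PiLp.sub_apply, PiLp.single_apply, Real.norm_eq_abs,
      sq_abs, Fin.sum_univ_three, Fin.isValue, ↓reduceIte, one_ne_zero, Fin.reduceEq, sub_zero]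
    ring
  rw [mem_closedBall, dist_eq_norm] at hyx
  obtain ⟨hlow, hup⟩ := abs_le.mp (mem_sphericalShell.mp hyT)
  have hball : ‖y - EuclideanSpace.single 0 ‖x‖‖ ^ 2 ≤ r ^ 2 :=
    pow_le_pow_left₀ (norm_nonneg _) hyx 2
  have hyT' : (T - C) ^ 2 ≤ ‖y‖ ^ 2 := pow_le_pow_left₀ (by linarith) (by linarith) 2
  have hyT'' : ‖y‖ ^ 2 ≤ (T + C) ^ 2 := pow_le_pow_left₀ (norm_nonneg _) (by linarith) 2
  simp only [e, Set.mem_preimage, Set.mem_ofPred, Set.mem_Icc, MeasurableEquiv.trans_apply,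
    MeasurableEquiv.toLp_symm_apply, MeasurableEquiv.piFinSuccAbove_apply, Fin.insertNthEquiv_zero,
    Fin.consEquiv_symm_apply, Fin.tail, Fin.succ_zero_eq_one, Fin.succ_one_eq_two]
  refine ⟨by nlinarith [sq_nonneg (y 0 - ‖x‖)], by linarith, by linarith⟩

theorem exists_volume_closedBall_inter_sphericalShell_le {C : ℝ} (hC : 0 ≤ C) :
    ∃ κ : ℝ, 0 ≤ κ ∧ ∀ T : ℝ, 0 ≤ T → ∀ (x : E3) (r : ℝ), 1 ≤ r →
      volume (closedBall x r ∩ sphericalShell T C) ≤ ENNReal.ofReal (κ * r ^ 2) := by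
  refine ⟨π * 4 / 3 * (6 * C * (2 * C + 2) ^ 2 + 2 * C ^ 3) + 32 * C, by positivity, ?_⟩
  intro T hT x r hr
  have hr2 : 1 ≤ r ^ 2 := one_le_pow₀ hr
  rcases le_or_gt T (2 * C + 2 * r) with hTr | hTr
  · refine (measure_mono Set.inter_subset_right).trans
      ((volume_sphericalShell_le hT hC).trans (ENNReal.ofReal_le_ofReal ?_))
    have hT' : T ^ 2 ≤ (2 * C + 2) ^ 2 * r ^ 2 := by
      rw [← mul_pow]; exact pow_le_pow_left₀ hT (by nlinarith) 2
    have hcube : (T + C) ^ 3 - (T - C) ^ 3 ≤ (6 * C * (2 * C + 2) ^ 2 + 2 * C ^ 3) * r ^ 2 := by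
      have : 0 ≤ C ^ 3 := by positivity
      nlinarith
    have : 0 ≤ 32 * C * r ^ 2 := by positivity
    nlinarith [mul_le_mul_of_nonneg_left hcube (by positivity : (0 : ℝ) ≤ π * 4 / 3)]
  · refine (volume_closedBall_inter_sphericalShell_le_of_lt hC (by linarith) hTr x).trans
      (ENNReal.ofReal_le_ofReal ?_)
    have : 0 ≤ π * 4 / 3 * (6 * C * (2 * C + 2) ^ 2 + 2 * C ^ 3) * r ^ 2 := by positivity
    nlinarith

/-- For s > 3/4 the convolution of the annulus indicator χ_{|ξ|=T+O(1)} with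
⟨ξ⟩^{−2(s+1/4)} is bounded on ℝ³ uniformly in T ∈ ℕ. -/
theorem stmt14 (s C : ℝ) (hs : s > 3/4) (hC : 0 < C) :
    ∃ K : ℝ, ∀ (T : ℕ) (x : EuclideanSpace ℝ (Fin 3)),
      (∫ y : EuclideanSpace ℝ (Fin 3),
        Set.indicator {y : EuclideanSpace ℝ (Fin 3) | |‖y‖ - (T : ℝ)| ≤ C}
          (fun _ => (1 : ℝ)) y * (1 + ‖x - y‖ ^ 2) ^ (-(s + 1/4))) ≤ K := by
  obtain ⟨κ, hκ, hvol⟩ := exists_volume_closedBall_inter_sphericalShell_le hC.le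
  have hq : (2 : ℝ) < 2 * (s + 1/4) := by linarith
  have hK : 0 ≤ κ * 2 ^ (2 : ℝ) / (1 - 2 ^ ((2 : ℝ) - 2 * (s + 1/4))) :=
    div_nonneg (by positivity)
      (sub_nonneg.mpr (Real.rpow_le_one_of_one_le_of_nonpos one_le_two (by linarith)))
  refine ⟨κ * 2 ^ (2 : ℝ) / (1 - 2 ^ ((2 : ℝ) - 2 * (s + 1/4))), fun T x => ?_⟩
  have hlint := lintegral_one_add_dist_sq_rpow_neg_le (volume.restrict (sphericalShell (T : ℝ) C))
    x (by linarith) hq fun r hr => by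
      rw [Measure.restrict_apply measurableSet_closedBall, Real.rpow_two]
      exact hvol T (Nat.cast_nonneg T) x r hr
  simp_rw [← Set.indicator_mul_left (g := fun y => (1 + ‖x - y‖ ^ 2) ^ (-(s + 1/4))), one_mul]
  refine (integral_indicator measurableSet_sphericalShell).trans_le <| (Real.le_norm_self _).trans
    ((norm_integral_le_lintegral_norm _).trans (ENNReal.toReal_le_of_le_ofReal hK ?_))
  convert hlint using 3 with y
  rw [Real.norm_of_nonneg (by positivity), dist_eq_norm]
end
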